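/- arXiv:2406.14094 — 6 statements merged into one kernel-verified Lean document; each statement's English description precedes it below -/
import Mathlib

section
/- Suppose R ⊆ D^Σ has non-empty complement, but for every attribute i ∈ Σ the projection of the complement ¬R to position i is a proper subset of D. Then R is non-degenerate (not a Cartesian product over any partition into at least two non-empty parts). -/
/-- Restriction of an attributed tuple to a subset of attributes. -/
def restrictTo {σ D : Type*} (a : σ → D) (Λ : Set σ) : ↥Λ → D := fun x => a x

/-- Projection of an attributed relation to a subset of attributes. -/
def proj {σ D : Type*} (R : Set (σ → D)) (Λ : Set σ) : Set (↥Λ → D) :=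
  (fun a => restrictTo a Λ) '' R

/-- `Λ : Fin m → Set σ` is a partition of the attribute set `σ`. -/
def IsPartition {σ : Type*} (m : ℕ) (Λ : Fin m → Set σ) : Prop :=
  Pairwise (Function.onFun Disjoint Λ) ∧ ⋃ i, Λ i = Set.univ

/-- `R` is a Cartesian product over the family `Λ`. -/
def IsCartesianProductOver {σ D : Type*} (R : Set (σ → D)) (m : ℕ)
    (Λ : Fin m → Set σ) : Prop :=
  ∃ Rs : ∀ i, Set (↥(Λ i) → D), R = {a | ∀ i, restrictTo a (Λ i) ∈ Rs i}

/-- A relation is degenerate when it is a Cartesian product over a partition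
into at least two non-empty parts. -/
def Degenerate {σ D : Type*} (R : Set (σ → D)) : Prop :=
  ∃ m, 2 ≤ m ∧ ∃ Λ : Fin m → Set σ, IsPartition m Λ ∧ (∀ i, (Λ i).Nonempty) ∧
    IsCartesianProductOver R m Λ

/-
If `R` is a product over parts `Λ₁, …, Λₘ` and `a ∉ R`, then some block `a|_{Λᵢ}` already lies
outside `Rᵢ`, so every tuple agreeing with `a` on `Λᵢ` lies outside `R`. Changing `a` at a single
attribute of another (non-empty) part then produces tuples of `¬R` with every value at that
attribute, so the projection of `¬R` there is all of `D`.
-/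

theorem restrictTo_update_of_notMem {σ D : Type*} [DecidableEq σ] (a : σ → D) {Λ : Set σ}
    {x : σ} (hx : x ∉ Λ) (d : D) : restrictTo (Function.update a x d) Λ = restrictTo a Λ := by
  funext y
  exact Function.update_of_ne (fun h : (y : σ) = x => hx (h ▸ y.2)) d a

theorem IsCartesianProductOver.exists_forall_notMem_of_restrictTo_eq {σ D : Type*}
    {R : Set (σ → D)} {m : ℕ} {Λ : Fin m → Set σ} (hR : IsCartesianProductOver R m Λ)
    {a : σ → D} (ha : a ∉ R) :
    ∃ i, ∀ b, restrictTo b (Λ i) = restrictTo a (Λ i) → b ∉ R := by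
  obtain ⟨Rs, rfl⟩ := hR
  simp only [Set.mem_ofPred_eq, not_forall] at ha ⊢
  obtain ⟨i, hi⟩ := ha
  exact ⟨i, fun b hb => ⟨i, hb ▸ hi⟩⟩

theorem IsCartesianProductOver.exists_values_compl_eq_univ {σ D : Type*} {R : Set (σ → D)}
    {m : ℕ} {Λ : Fin m → Set σ} (hR : IsCartesianProductOver R m Λ) (hne : Rᶜ.Nonempty) :
    ∃ i, ∀ x ∉ Λ i, {d : D | ∃ a ∈ Rᶜ, a x = d} = Set.univ := by
  classical
  obtain ⟨a, ha⟩ := hne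
  obtain ⟨i, hi⟩ := hR.exists_forall_notMem_of_restrictTo_eq ha
  refine ⟨i, fun x hx => Set.eq_univ_of_forall fun d => ?_⟩
  exact ⟨Function.update a x d, hi _ (restrictTo_update_of_notMem a hx d),
    Function.update_self x d a⟩

theorem exists_notMem_of_pairwise_disjoint {σ : Type*} {m : ℕ} (hm : 2 ≤ m)
    {Λ : Fin m → Set σ} (hdisj : Pairwise (Function.onFun Disjoint Λ))
    (hnonempty : ∀ i, (Λ i).Nonempty) (i : Fin m) : ∃ x, x ∉ Λ i := by
  have : Nontrivial (Fin m) := Fin.nontrivial_iff_two_le.mpr hm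
  obtain ⟨j, hji⟩ := exists_ne i
  obtain ⟨x, hx⟩ := hnonempty j
  exact ⟨x, Set.disjoint_left.mp (hdisj hji) hx⟩

theorem stmt_3_general {σ D : Type*}
    (R : Set (σ → D)) (hne : Rᶜ.Nonempty)
    (hproj : ∀ i : σ, {d : D | ∃ a ∈ Rᶜ, a i = d} ≠ Set.univ) :
    ¬ Degenerate R := by
  rintro ⟨m, hm, Λ, ⟨hdisj, -⟩, hnonempty, hR⟩
  obtain ⟨i, hi⟩ := hR.exists_values_compl_eq_univ hne
  obtain ⟨x, hx⟩ := exists_notMem_of_pairwise_disjoint hm hdisj hnonempty i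
  exact hproj x (hi x hx)

/-- If the complement of `R` is non-empty but its projection to every single
attribute is a proper subset of the domain, then `R` is non-degenerate. -/
theorem stmt_3 {σ D : Type*} [Fintype σ] (hcard : 2 ≤ Fintype.card σ)
    (R : Set (σ → D)) (hne : Rᶜ.Nonempty)
    (hproj : ∀ i : σ, {d : D | ∃ a ∈ Rᶜ, a i = d} ≠ Set.univ) :
    ¬ Degenerate R :=
  stmt_3_general R hne hproj
end

section
/- For n ≥ 2 and |D| ≥ n, the diversity relation Dₙ = {a ∈ Dⁿ : all members of a are pairwise distinct} is non-degenerate: it is not a Cartesian product over any partition of the n positions into at least two non-empty parts. -/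
/-- For n ≥ 2 and |D| ≥ n the diversity relation (all injective tuples) is
non-degenerate. -/
theorem stmt_5 {D : Type*} (n : ℕ) (hn : 2 ≤ n)
    (hD : ∃ f : Fin n → D, Function.Injective f) :
    ¬ Degenerate {a : Fin n → D | Function.Injective a} := by
  classical
  rintro ⟨m, hm, Λ, ⟨hdisj, -⟩, hne, Rs, hR⟩
  obtain ⟨f, hf⟩ := hD
  set z : Fin m := ⟨0, by omega⟩ with hz
  set o : Fin m := ⟨1, by omega⟩ with ho
  have h01 : z ≠ o := by simp [hz, ho, Fin.ext_iff]
  obtain ⟨i₀, hi₀⟩ := hne z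
  obtain ⟨j₀, hj₀⟩ := hne o
  have hij : i₀ ≠ j₀ := by
    intro h; subst h
    exact Set.disjoint_left.mp (hdisj h01) hi₀ hj₀
  set g : Fin n → D := f ∘ Equiv.swap i₀ j₀ with hg
  have hginj : Function.Injective g := hf.comp (Equiv.injective _)
  set h : Fin n → D := fun x => if x ∈ Λ z then f x else g x with hh
  have hmem : h ∈ {a : Fin n → D | Function.Injective a} := by
    rw [hR]
    intro i
    by_cases hi : i = z
    · subst hi
      have he : restrictTo h (Λ z) = restrictTo f (Λ z) := by
        funext x; simp [restrictTo, hh, x.2]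
      rw [he]
      have hf' : f ∈ {a : Fin n → D | ∀ i, restrictTo a (Λ i) ∈ Rs i} := hR ▸ hf
      exact hf' z
    · have he : restrictTo h (Λ i) = restrictTo g (Λ i) := by
        funext x
        have hx : (x : Fin n) ∉ Λ z :=
          fun hx => Set.disjoint_left.mp (hdisj hi) x.2 hx
        simp [restrictTo, hh, hx]
      rw [he]
      have hg' : g ∈ {a : Fin n → D | ∀ i, restrictTo a (Λ i) ∈ Rs i} := hR ▸ hginj
      exact hg' i
  have heq : h i₀ = h j₀ := by
    have hj0 : j₀ ∉ Λ z := fun hx => Set.disjoint_left.mp (hdisj h01) hx hj₀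
    simp [hh, hi₀, hj0, hg, Equiv.swap_apply_right]
  exact hij (hmem heq)
end

section
/- On a finite domain D, the number of degenerate n-ary relations (those that are a Cartesian product over some partition of positions into at least two non-empty parts) is strictly less than 2^{n-1+|D|+|D|^{n-1}}, for all n ≥ 2 and |D| ≥ 2. -/
lemma aux_pow_ineq (d k n : ℕ) (hd : 2 ≤ d) (hk : 1 ≤ k) (hkn : k + 1 ≤ n) :
    d ^ k + d ^ (n - k) ≤ d + d ^ (n - 1) := by
  obtain ⟨k', rfl⟩ : ∃ k', k = k' + 1 := ⟨k - 1, by omega⟩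
  obtain ⟨m, hm⟩ : ∃ m, n - (k' + 1) = m + 1 := ⟨n - (k' + 1) - 1, by omega⟩
  have hn1 : n - 1 = k' + m + 1 := by omega
  rw [hm, hn1]
  have h1 : 1 ≤ d ^ k' := Nat.one_le_pow _ _ (by omega)
  have h2 : 1 ≤ d ^ m := Nat.one_le_pow _ _ (by omega)
  have key : d ^ k' + d ^ m ≤ 1 + d ^ k' * d ^ m := by nlinarith
  calc d ^ (k' + 1) + d ^ (m + 1) = d * (d ^ k' + d ^ m) := by ring
    _ ≤ d * (1 + d ^ k' * d ^ m) := Nat.mul_le_mul_left _ key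
    _ = d + d ^ (k' + m + 1) := by ring

lemma lemA {σ D : Type*} {R : Set (σ → D)} (h : Degenerate R) :
    ∃ Λ : Set σ, Λ.Nonempty ∧ Λᶜ.Nonempty ∧
      R = {a | restrictTo a Λ ∈ proj R Λ ∧ restrictTo a Λᶜ ∈ proj R Λᶜ} := by
  obtain ⟨m, hm, Λ, ⟨hdisj, -⟩, hne, Rs, hR⟩ := h
  set i0 : Fin m := ⟨0, by omega⟩
  set i1 : Fin m := ⟨1, by omega⟩
  refine ⟨Λ i0, hne _, ?_, ?_⟩
  · obtain ⟨x, hx⟩ := hne i1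
    exact ⟨x, fun hx0 => (hdisj (show i0 ≠ i1 by simp [i0, i1])).le_bot ⟨hx0, hx⟩⟩
  · ext a
    constructor
    · intro ha; exact ⟨⟨a, ha, rfl⟩, ⟨a, ha, rfl⟩⟩
    · rintro ⟨⟨b, hb, hab⟩, ⟨c, hc, hac⟩⟩
      rw [hR]
      intro i
      by_cases hi : i = i0
      · subst hi
        have : restrictTo a (Λ i0) = restrictTo b (Λ i0) := hab.symm
        rw [this]
        exact (hR ▸ hb) i0
      · have hsub : Λ i ⊆ (Λ i0)ᶜ := fun x hx hx0 =>
          (hdisj (Ne.symm hi)).le_bot ⟨hx0, hx⟩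
        have : restrictTo a (Λ i) = restrictTo c (Λ i) := by
          funext x
          exact (congrFun hac ⟨x.1, hsub x.2⟩).symm
        rw [this]
        exact (hR ▸ hc) i

lemma lemB {σ D : Type*} {R : Set (σ → D)} {Λ : Set σ}
    (h : R = {a | restrictTo a Λ ∈ proj R Λ ∧ restrictTo a Λᶜ ∈ proj R Λᶜ}) :
    R = {a | restrictTo a Λᶜ ∈ proj R Λᶜ ∧ restrictTo a Λᶜᶜ ∈ proj R Λᶜᶜ} := by
  ext a
  constructor
  · intro ha; exact ⟨⟨a, ha, rfl⟩, ⟨a, ha, rfl⟩⟩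
  · rintro ⟨h1, ⟨b, hb, hab⟩⟩
    rw [h]
    refine ⟨⟨b, hb, ?_⟩, h1⟩
    funext x
    exact congrFun hab ⟨x.1, not_not_intro x.2⟩

lemma lemC {σ D : Type*} (i0 : σ) {R : Set (σ → D)} (h : Degenerate R) :
    ∃ Λ : Set σ, i0 ∈ Λ ∧ Λ ≠ Set.univ ∧
      R = {a | restrictTo a Λ ∈ proj R Λ ∧ restrictTo a Λᶜ ∈ proj R Λᶜ} := by
  obtain ⟨Λ, hΛ, hΛc, hP⟩ := lemA h
  by_cases h0 : i0 ∈ Λ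
  · refine ⟨Λ, h0, ?_, hP⟩
    intro hu
    obtain ⟨x, hx⟩ := hΛc
    exact hx (hu ▸ Set.mem_univ x)
  · refine ⟨Λᶜ, h0, ?_, lemB hP⟩
    intro hu
    obtain ⟨x, hx⟩ := hΛ
    have : x ∈ Λᶜ := hu ▸ Set.mem_univ x
    exact this hx

lemma card_set_eq {X : Type*} [Finite X] : Nat.card (Set X) = 2 ^ Nat.card X := by
  have := Fintype.ofFinite X
  classical
  rw [Nat.card_eq_fintype_card, Nat.card_eq_fintype_card (α := X), Fintype.card_set]

lemma emb_of_card_le {X : Type*} [Finite X] (B : ℕ) (h : Nat.card X ≤ B) :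
    Nonempty (X ↪ Fin B) := by
  have := Fintype.ofFinite X
  apply Function.Embedding.nonempty_of_card_le
  rwa [Fintype.card_fin, ← Nat.card_eq_fintype_card]


/-- The number of degenerate n-ary relations on a finite domain `D` is
strictly less than `2 ^ (n - 1 + |D| + |D| ^ (n - 1))`. -/
theorem stmt_10 {D : Type*} [Fintype D] (n : ℕ) (hn : 2 ≤ n)
    (hd : 2 ≤ Fintype.card D) :
    Nat.card {R : Set (Fin n → D) // Degenerate R} <
      2 ^ (n - 1 + Fintype.card D + Fintype.card D ^ (n - 1)) := by
  classical
  set d := Fintype.card D with hdD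
  set B := 2 ^ (d + d ^ (n - 1)) with hB
  let i0 : Fin n := ⟨0, by omega⟩
  let K := {Λ : Set (Fin n) // i0 ∈ Λ ∧ Λ ≠ Set.univ}
  let T := Σ Λ : K, Set (↥Λ.1 → D) × Set (↥(Λ.1ᶜ) → D)
  let dec : T → Set (Fin n → D) := fun t =>
    {a | restrictTo a t.1.1 ∈ t.2.1 ∧ restrictTo a t.1.1ᶜ ∈ t.2.2}
  let f : {R : Set (Fin n → D) // Degenerate R} → T := fun x =>
    ⟨⟨(lemC i0 x.2).choose, (lemC i0 x.2).choose_spec.1, (lemC i0 x.2).choose_spec.2.1⟩,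
     proj x.1 (lemC i0 x.2).choose, proj x.1 (lemC i0 x.2).chooseᶜ⟩
  have hdec : ∀ x, dec (f x) = x.1 := fun x => ((lemC i0 x.2).choose_spec.2.2).symm
  have hf : Function.Injective f := fun x y hxy =>
    Subtype.ext (by rw [← hdec x, ← hdec y, hxy])
  have h1 : Nat.card {R : Set (Fin n → D) // Degenerate R} ≤ Nat.card T :=
    Nat.card_le_card_of_injective f hf
  -- per-fiber bound
  have hfiber : ∀ Λ : K, Nat.card (Set (↥Λ.1 → D) × Set (↥(Λ.1ᶜ) → D)) ≤ B := by
    intro ⟨Λ, h0, hu⟩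
    have hkj : Λ.ncard + Λᶜ.ncard = n := by
      rw [Set.ncard_add_ncard_compl, Nat.card_eq_fintype_card, Fintype.card_fin]
    have hk1 : 1 ≤ Λ.ncard := (Set.ncard_pos).mpr ⟨i0, h0⟩
    have hj1 : 1 ≤ Λᶜ.ncard := (Set.ncard_pos).mpr (Set.nonempty_compl.mpr hu)
    show Nat.card (Set (↥Λ → D) × Set (↥Λᶜ → D)) ≤ B
    rw [Nat.card_prod, card_set_eq, card_set_eq, Nat.card_fun, Nat.card_fun,
      Nat.card_coe_set_eq, Nat.card_coe_set_eq, ← pow_add,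
      Nat.card_eq_fintype_card (α := D), ← hdD]
    have hle : d ^ Λ.ncard + d ^ Λᶜ.ncard ≤ d + d ^ (n - 1) := by
      have := aux_pow_ineq d Λ.ncard n hd hk1 (by omega)
      rwa [show n - Λ.ncard = Λᶜ.ncard by omega] at this
    exact Nat.pow_le_pow_right (by norm_num) hle
  -- embed T into K × Fin B
  let g : ∀ Λ : K, (Set (↥Λ.1 → D) × Set (↥(Λ.1ᶜ) → D)) ↪ Fin B :=
    fun Λ => (emb_of_card_le B (hfiber Λ)).some
  let f2 : T → K × Fin B := fun t => (t.1, g t.1 t.2)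
  have hf2 : Function.Injective f2 := by
    rintro ⟨Λ₁, v₁⟩ ⟨Λ₂, v₂⟩ h
    simp only [f2, Prod.mk.injEq] at h
    obtain ⟨h1', h2⟩ := h
    subst h1'
    exact congrArg _ ((g Λ₁).injective h2)
  have h2 : Nat.card T ≤ Nat.card K * B := by
    calc Nat.card T ≤ Nat.card (K × Fin B) := Nat.card_le_card_of_injective f2 hf2
      _ = Nat.card K * B := by rw [Nat.card_prod, Nat.card_eq_fintype_card (α := Fin B),
        Fintype.card_fin]
  -- card K < 2^(n-1)
  have hK : Nat.card K < 2 ^ (n - 1) := by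
    let g2 : K → Set {i : Fin n // i ≠ i0} := fun Λ => Subtype.val ⁻¹' Λ.1
    have hg2 : Function.Injective g2 := by
      rintro ⟨Λ₁, h01, hu1⟩ ⟨Λ₂, h02, hu2⟩ h
      ext1
      ext i
      by_cases hi : i = i0
      · subst hi; simp [h01, h02]
      · constructor
        · intro hmem
          have : (⟨i, hi⟩ : {i : Fin n // i ≠ i0}) ∈ g2 ⟨Λ₁, h01, hu1⟩ := hmem
          rw [h] at this; exact this
        · intro hmem
          have : (⟨i, hi⟩ : {i : Fin n // i ≠ i0}) ∈ g2 ⟨Λ₂, h02, hu2⟩ := hmem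
          rw [← h] at this; exact this
    have hnr : Set.univ ∉ Set.range g2 := by
      rintro ⟨⟨Λ, h0, hu⟩, hΛ⟩
      apply hu
      ext i
      simp only [Set.mem_univ, iff_true]
      by_cases hi : i = i0
      · subst hi; exact h0
      · have : (⟨i, hi⟩ : {i : Fin n // i ≠ i0}) ∈ g2 ⟨Λ, h0, hu⟩ := by
          rw [hΛ]; trivial
        exact this
    have hcard : Fintype.card K < Fintype.card (Set {i : Fin n // i ≠ i0}) :=
      Fintype.card_lt_of_injective_of_notMem g2 hg2 hnr
    have hc2 : Fintype.card (Set {i : Fin n // i ≠ i0}) = 2 ^ (n - 1) := by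
      rw [Fintype.card_set, Fintype.card_subtype_compl, Fintype.card_fin,
        Fintype.card_subtype_eq]
    rw [Nat.card_eq_fintype_card]
    omega
  have hfin : 2 ^ (n - 1 + d + d ^ (n - 1)) = 2 ^ (n - 1) * B := by
    rw [hB, ← pow_add]; ring_nf
  calc Nat.card {R : Set (Fin n → D) // Degenerate R} ≤ Nat.card T := h1
    _ ≤ Nat.card K * B := h2
    _ < 2 ^ (n - 1) * B := by
        apply Nat.mul_lt_mul_of_lt_of_le hK le_rfl
        positivity
    _ = 2 ^ (n - 1 + d + d ^ (n - 1)) := hfin.symm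
end

section
/- On a finite domain D with |D| = d, the number of join-reducible n-ary relations (relations expressible as a natural join of relations each on a proper non-empty subset of positions) is at most 2^{n·d^{n-1}}. Consequently, if d > n then the join-reducible relations form a proper subset of all n-ary relations, since 2^{n·d^{n-1}} < 2^{dⁿ}. -/
/-- A relation is join reducible when it is a natural join over a cover by
non-empty proper subsets of attributes. -/
def JoinReducible {σ D : Type*} (R : Set (σ → D)) : Prop :=
  ∃ m, ∃ Λ : Fin m → Set σ, (⋃ i, Λ i = Set.univ) ∧
    (∀ i, (Λ i).Nonempty ∧ Λ i ≠ Set.univ) ∧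
    ∃ Rs : ∀ i, Set (↥(Λ i) → D), R = {a | ∀ i, restrictTo a (Λ i) ∈ Rs i}

/-!
Every factor `Λᵢ` of a join reduction misses some attribute `j`, so it lies in `{j}ᶜ`, and the
factor constraint is implied by membership in the projection of `R` to `{j}ᶜ`. Hence a join
reducible relation is the join of its `n` projections to the co-singletons and is determined by
them. Each of these `n` projections is one of `2 ^ d ^ (n - 1)` relations, which gives the bound;
and `n · d ^ (n - 1) < d · d ^ (n - 1) = d ^ n` when `n < d`.
-/

section JoinReducible

variable {σ D : Type*}

theorem JoinReducible.eq_join_proj_compl_singleton {R : Set (σ → D)} (h : JoinReducible R) :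
    R = {a | ∀ j : σ, restrictTo a {j}ᶜ ∈ proj R {j}ᶜ} := by
  obtain ⟨m, Λ, -, hproper, Rs, rfl⟩ := h
  ext a
  refine ⟨fun ha j => ⟨a, ha, rfl⟩, fun ha i => ?_⟩
  obtain ⟨j, hj⟩ : ∃ j, j ∉ Λ i := by
    by_contra! hall
    exact (hproper i).2 (Set.eq_univ_of_forall hall)
  obtain ⟨b, hbR, hba⟩ := ha j
  have hΛ : Λ i ⊆ {j}ᶜ := fun x hx hxj => hj (hxj ▸ hx)
  have hab : restrictTo a (Λ i) = restrictTo b (Λ i) :=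
    funext fun x => (congrFun hba ⟨x, hΛ x.2⟩).symm
  exact hab ▸ hbR i

theorem JoinReducible.injective_proj_compl_singleton :
    Function.Injective fun R : {R : Set (σ → D) // JoinReducible R} =>
      fun j : σ => proj R.1 {j}ᶜ := by
  rintro ⟨R, hR⟩ ⟨S, hS⟩ hRS
  have hproj : ∀ j : σ, proj R {j}ᶜ = proj S {j}ᶜ := congrFun hRS
  simp only [Subtype.mk.injEq]
  rw [hR.eq_join_proj_compl_singleton, hS.eq_join_proj_compl_singleton]
  simp only [hproj]

theorem card_joinReducible_le [Fintype σ] [Fintype D] :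
    Nat.card {R : Set (σ → D) // JoinReducible R} ≤
      2 ^ (Fintype.card σ * Fintype.card D ^ (Fintype.card σ - 1)) := by
  classical
  have hcard : ∀ j : σ, Nat.card (Set (↥({j}ᶜ : Set σ) → D)) =
      2 ^ Fintype.card D ^ (Fintype.card σ - 1) := fun j => by
    rw [Nat.card_eq_fintype_card, Fintype.card_set, Fintype.card_fun,
      Fintype.card_compl_set, Set.card_singleton]
  calc Nat.card {R : Set (σ → D) // JoinReducible R}
      ≤ Nat.card (∀ j : σ, Set (↥({j}ᶜ : Set σ) → D)) :=
        Nat.card_le_card_of_injective _ JoinReducible.injective_proj_compl_singleton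
    _ = ∏ j : σ, 2 ^ Fintype.card D ^ (Fintype.card σ - 1) := by
        rw [Nat.card_pi]; simp only [hcard]
    _ = 2 ^ (Fintype.card σ * Fintype.card D ^ (Fintype.card σ - 1)) := by
        rw [Finset.prod_const, Finset.card_univ, ← pow_mul, mul_comm]

end JoinReducible

theorem mul_pow_pred_lt_pow {n d : ℕ} (h : n < d) : n * d ^ (n - 1) < d ^ n := by
  cases n with
  | zero => simp
  | succ k =>
    rw [Nat.add_sub_cancel, pow_succ', Nat.mul_lt_mul_right (pow_pos (by omega) _)]
    exact h

theorem stmt_11_general {D : Type*} [Fintype D] (n : ℕ) :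
    Nat.card {R : Set (Fin n → D) // JoinReducible R} ≤
      2 ^ (n * Fintype.card D ^ (n - 1)) ∧
    (n < Fintype.card D →
      2 ^ (n * Fintype.card D ^ (n - 1)) < 2 ^ (Fintype.card D ^ n)) := by
  refine ⟨?_, fun hnd => Nat.pow_lt_pow_right one_lt_two (mul_pow_pred_lt_pow hnd)⟩
  simpa using card_joinReducible_le (σ := Fin n) (D := D)

/-- There are at most `2 ^ (n * d ^ (n-1))` join reducible n-ary relations on
a domain of size `d`; for `d > n` this is less than the number `2 ^ (d ^ n)`
of all n-ary relations. -/
theorem stmt_11 {D : Type*} [Fintype D] (n : ℕ) (hn : 2 ≤ n) :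
    Nat.card {R : Set (Fin n → D) // JoinReducible R} ≤
      2 ^ (n * Fintype.card D ^ (n - 1)) ∧
    (n < Fintype.card D →
      2 ^ (n * Fintype.card D ^ (n - 1)) < 2 ^ (Fintype.card D ^ n)) :=
  stmt_11_general n
end

section
/- Hypostatic abstraction: If R ⊆ Dⁿ satisfies |R| ≤ |D|, then there exist binary relations R₁,...,Rₙ ⊆ D² such that R(x₁,...,xₙ) holds if and only if ∃t, R₁(t,x₁) ∧ ... ∧ Rₙ(t,xₙ). In particular, every n-ary relation on an infinite domain is a projoin of n binaries with a single parameter. -/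
/-- Hypostatic abstraction: if `|R| ≤ |D|` then `R` is a projoin of `n`
binaries with a single parameter: `R(x₁,...,xₙ) ↔ ∃ t, ⋀ᵢ Rᵢ(t, xᵢ)`. -/
theorem stmt_13 {D : Type*} (n : ℕ) (hn : 1 ≤ n) (R : Set (Fin n → D))
    (hcard : ∃ f : ↥R → D, Function.Injective f) :
    ∃ Rs : Fin n → Set (D × D),
      R = {a : Fin n → D | ∃ t : D, ∀ i, (t, a i) ∈ Rs i} := by
  obtain ⟨f, hf⟩ := hcard
  refine ⟨fun i => {p | ∃ a : R, f a = p.1 ∧ (a : Fin n → D) i = p.2}, ?_⟩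
  ext a
  constructor
  · intro ha
    exact ⟨f ⟨a, ha⟩, fun i => ⟨⟨a, ha⟩, rfl, rfl⟩⟩
  · rintro ⟨t, ht⟩
    have i0 : Fin n := ⟨0, hn⟩
    obtain ⟨b, hb1, _⟩ := ht i0
    have : a = (b : Fin n → D) := by
      funext i
      obtain ⟨c, hc1, hc2⟩ := ht i
      have : c = b := hf (by rw [hc1, hb1])
      rw [this] at hc2; exact hc2.symm
    rw [this]; exact b.2
end

section
/- On a two-element domain D = {α, β}, the non-identity ternary relation ¬I₃ = D³ \ {(α,α,α),(β,β,β)} cannot be written as a union of two unary Cartesian products: there are no subsets A₁,A₂,A₃,B₁,B₂,B₃ ⊆ D with ¬I₃ = (A₁×A₂×A₃) ∪ (B₁×B₂×B₃). Consequently ¬I₃ is not projoin reducible with one parameter, i.e., there are no binary relations R₁,R₂,R₃ ⊆ D² with ¬I₃(x₁,x₂,x₃) ⟺ ∃t, R₁(t,x₁) ∧ R₂(t,x₂) ∧ R₃(t,x₃). -/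
lemma key_bool_stmt_19 : ∀ A₁ A₂ A₃ B₁ B₂ B₃ : Bool → Bool,
    ¬ (∀ x y z : Bool, (¬ (x = y ∧ y = z)) ↔
      (A₁ x ∧ A₂ y ∧ A₃ z) ∨ (B₁ x ∧ B₂ y ∧ B₃ z)) := by decide

lemma key_aux_stmt_19 (A₁ A₂ A₃ B₁ B₂ B₃ : Bool → Prop)
    (h : ∀ x y z : Bool, (¬ (x = y ∧ y = z)) ↔
      (A₁ x ∧ A₂ y ∧ A₃ z) ∨ (B₁ x ∧ B₂ y ∧ B₃ z)) : False := by
  classical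
  apply key_bool_stmt_19 (fun x => decide (A₁ x)) (fun x => decide (A₂ x))
    (fun x => decide (A₃ x)) (fun x => decide (B₁ x)) (fun x => decide (B₂ x))
    (fun x => decide (B₃ x))
  intro x y z
  simpa using h x y z

/-- On a two-element domain, the non-identity ternary relation `¬I₃` is not a
union of two unary Cartesian products; consequently it is not projoin
reducible with one parameter, i.e. not of the form
`∃ t, R₁(t,x₁) ∧ R₂(t,x₂) ∧ R₃(t,x₃)` for binary `R₁, R₂, R₃`. -/
theorem stmt_19 :
    (¬ ∃ A₁ A₂ A₃ B₁ B₂ B₃ : Set Bool,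
      {p : Bool × Bool × Bool | ¬ (p.1 = p.2.1 ∧ p.2.1 = p.2.2)} =
        {p : Bool × Bool × Bool | p.1 ∈ A₁ ∧ p.2.1 ∈ A₂ ∧ p.2.2 ∈ A₃} ∪
        {p : Bool × Bool × Bool | p.1 ∈ B₁ ∧ p.2.1 ∈ B₂ ∧ p.2.2 ∈ B₃}) ∧
    (¬ ∃ R₁ R₂ R₃ : Set (Bool × Bool),
      ∀ x y z : Bool, (¬ (x = y ∧ y = z)) ↔
        ∃ t : Bool, (t, x) ∈ R₁ ∧ (t, y) ∈ R₂ ∧ (t, z) ∈ R₃) := by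
  constructor
  · rintro ⟨A₁, A₂, A₃, B₁, B₂, B₃, h⟩
    refine key_aux_stmt_19 (· ∈ A₁) (· ∈ A₂) (· ∈ A₃) (· ∈ B₁) (· ∈ B₂) (· ∈ B₃) ?_
    intro x y z
    simpa [Set.mem_union] using Set.ext_iff.mp h (x, y, z)
  · rintro ⟨R₁, R₂, R₃, h⟩
    refine key_aux_stmt_19 (fun x => (true, x) ∈ R₁) (fun x => (true, x) ∈ R₂)
      (fun x => (true, x) ∈ R₃) (fun x => (false, x) ∈ R₁)
      (fun x => (false, x) ∈ R₂) (fun x => (false, x) ∈ R₃) ?_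
    intro x y z
    rw [h x y z, Bool.exists_bool]
    tauto
end
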